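/- Let S be a semilattice of non-associative algebras over a field F, i.e. a non-associative inverse semialgebra satisfying 0_{x·y} = 0_{x+y} for all x, y ∈ S. Then x·0_y = 0_x·y = 0_x·0_y = 0_{x·y} = 0_x + 0_y for all x, y ∈ S. In particular, e·f = e + f = f·e for all additive idempotents e, f of S. -/
import Mathlib


/-- An inverse semivector space over a field `F`. -/
structure InvSemivectorSpace (F : Type*) [Field F] (V : Type*) where
  add : V → V → V
  neg : V → V
  smul : F → V → V
  add_comm' : ∀ x y : V, add x y = add y x
  add_assoc' : ∀ x y z : V, add (add x y) z = add x (add y z)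
  add_neg_add : ∀ x : V, add (add x (neg x)) x = x
  neg_add_neg : ∀ x : V, add (add (neg x) x) (neg x) = neg x
  add_smul' : ∀ (α β : F) (x : V), smul (α + β) x = add (smul α x) (smul β x)
  smul_add' : ∀ (α : F) (x y : V), smul α (add x y) = add (smul α x) (smul α y)
  smul_smul' : ∀ (α β : F) (x : V), smul α (smul β x) = smul (α * β) x
  one_smul' : ∀ x : V, smul 1 x = x

namespace InvSemivectorSpace

variable {F : Type*} [Field F] {V : Type*} (S : InvSemivectorSpace F V)

/-- `0_x := x + neg x`. -/
def z0 (x : V) : V := S.add x (S.neg x)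

/-- The natural partial order: `x ⪯ y` iff `x = y + 0_x`. -/
def le (x y : V) : Prop := x = S.add y (S.z0 x)

/-- Additive idempotents. -/
def IsIdem (e : V) : Prop := S.add e e = e

end InvSemivectorSpace


/-- A non-associative inverse semialgebra over `F`. -/
structure NAInvSemialgebra (F : Type*) [Field F] (V : Type*) extends
    InvSemivectorSpace F V where
  mul : V → V → V
  smul_mul : ∀ (α : F), α ≠ 0 → ∀ x y : V, smul α (mul x y) = mul (smul α x) y
  mul_smul'' : ∀ (α : F), α ≠ 0 → ∀ x y : V, smul α (mul x y) = mul x (smul α y)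
  mul_add_le : ∀ x y z : V,
    toInvSemivectorSpace.le (add (mul x y) (mul x z)) (mul x (add y z))
  add_mul_le : ∀ x y z : V,
    toInvSemivectorSpace.le (add (mul x y) (mul z y)) (mul (add x z) y)
  mul_idem_add : ∀ x z e : V, toInvSemivectorSpace.IsIdem e →
    mul x (add e z) = add (mul x e) (mul x z)
  idem_add_mul : ∀ x z e : V, toInvSemivectorSpace.IsIdem e →
    mul (add x e) z = add (mul x z) (mul e z)
  idem_mul_le₁ : ∀ e f : V, toInvSemivectorSpace.IsIdem e → toInvSemivectorSpace.IsIdem f →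
    toInvSemivectorSpace.le (add e f) (mul e f)
  idem_mul_le₂ : ∀ e f : V, toInvSemivectorSpace.IsIdem e → toInvSemivectorSpace.IsIdem f →
    toInvSemivectorSpace.le (mul e f) f


section Aux

namespace InvSemivectorSpace

variable {F : Type*} [Field F] {V : Type*} (S : InvSemivectorSpace F V)

local instance instAssoc : Std.Associative S.add := ⟨S.add_assoc'⟩
local instance instComm : Std.Commutative S.add := ⟨S.add_comm'⟩

lemma neg_unique (x n : V) (h1 : S.add (S.add x n) x = x)
    (h2 : S.add (S.add n x) n = n) : n = S.neg x := by
  have hm1 := S.add_neg_add x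
  have hm2 := S.neg_add_neg x
  have e1 : n = S.add (S.add n (S.neg x)) x := by
    calc n = S.add (S.add n x) n := h2.symm
    _ = S.add (S.add n (S.add (S.add x (S.neg x)) x)) n := by rw [hm1]
    _ = S.add (S.add (S.add (S.add n x) n) (S.neg x)) x := by ac_rfl
    _ = S.add (S.add n (S.neg x)) x := by rw [h2]
  have e2 : S.neg x = S.add (S.add (S.neg x) n) x := by
    calc S.neg x = S.add (S.add (S.neg x) x) (S.neg x) := hm2.symm
    _ = S.add (S.add (S.neg x) (S.add (S.add x n) x)) (S.neg x) := by rw [h1]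
    _ = S.add (S.add (S.add (S.add (S.neg x) x) (S.neg x)) n) x := by ac_rfl
    _ = S.add (S.add (S.neg x) n) x := by rw [hm2]
  calc n = S.add (S.add n (S.neg x)) x := e1
  _ = S.add (S.add (S.neg x) n) x := by ac_rfl
  _ = S.neg x := e2.symm

lemma key_smul (a b : F) (x : V) :
    S.add (S.smul a x) (S.smul b x) = S.smul (a + b) x :=
  (S.add_smul' a b x).symm

lemma neg_eq_smul (x : V) : S.neg x = S.smul (-1) x := by
  have h1 := S.one_smul' x
  refine (S.neg_unique x _ ?_ ?_).symm
  · have g : S.add (S.add (S.smul (1:F) x) (S.smul (-1:F) x)) (S.smul (1:F) x)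
        = S.smul ((1:F) + -1 + 1) x := by
      rw [S.key_smul, S.key_smul]
    rw [h1] at g
    rw [g]
    norm_num [h1]
  · have g : S.add (S.add (S.smul (-1:F) x) (S.smul (1:F) x)) (S.smul (-1:F) x)
        = S.smul ((-1:F) + 1 + -1) x := by
      rw [S.key_smul, S.key_smul]
    rw [h1] at g
    rw [g]
    norm_num

lemma z0_eq_smul (x : V) : S.z0 x = S.smul 0 x := by
  rw [z0, S.neg_eq_smul]
  calc S.add x (S.smul (-1) x) = S.add (S.smul 1 x) (S.smul (-1) x) := by rw [S.one_smul']
  _ = S.smul ((1:F) + -1) x := S.key_smul 1 (-1) x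
  _ = S.smul 0 x := by norm_num

lemma z0_add (x y : V) : S.z0 (S.add x y) = S.add (S.z0 x) (S.z0 y) := by
  rw [S.z0_eq_smul, S.z0_eq_smul, S.z0_eq_smul, S.smul_add']

lemma z0_of_idem {e : V} (he : S.IsIdem e) : S.z0 e = e := by
  have hn : e = S.neg e := S.neg_unique e e (by rw [he, he]) (by rw [he, he])
  rw [z0, ← hn, he]

lemma isIdem_z0 (x : V) : S.IsIdem (S.z0 x) := by
  rw [IsIdem, S.z0_eq_smul, S.key_smul]
  norm_num

lemma z0_z0 (x : V) : S.z0 (S.z0 x) = S.z0 x := S.z0_of_idem (S.isIdem_z0 x)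

end InvSemivectorSpace

end Aux

section Aux2

namespace NAInvSemialgebra

variable {F : Type*} [Field F] {V : Type*} (S : NAInvSemialgebra F V)

local instance instAssoc2 : Std.Associative S.toInvSemivectorSpace.add := ⟨S.add_assoc'⟩
local instance instComm2 : Std.Commutative S.toInvSemivectorSpace.add := ⟨S.add_comm'⟩

lemma isIdem_mul_right {e : V} (he : S.IsIdem e) (x : V) : S.IsIdem (S.mul x e) := by
  have h := S.mul_idem_add x e e he
  rw [he] at h
  exact h.symm

lemma isIdem_mul_left {e : V} (he : S.IsIdem e) (y : V) : S.IsIdem (S.mul e y) := by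
  have h := S.idem_add_mul e y e he
  rw [he] at h
  exact h.symm

lemma mul_eq_of_idem (hsem : ∀ x y : V, S.z0 (S.mul x y) = S.z0 (S.add x y))
    {x y : V} (h : S.IsIdem (S.mul x y)) :
    S.mul x y = S.add (S.z0 x) (S.z0 y) := by
  calc S.mul x y = S.z0 (S.mul x y) := (S.toInvSemivectorSpace.z0_of_idem h).symm
  _ = S.z0 (S.add x y) := hsem x y
  _ = S.add (S.z0 x) (S.z0 y) := S.toInvSemivectorSpace.z0_add x y

end NAInvSemialgebra

end Aux2

theorem stmt_10 {F : Type*} [Field F] {V : Type*} (S : NAInvSemialgebra F V)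
    (hsem : ∀ x y : V, S.z0 (S.mul x y) = S.z0 (S.add x y)) :
    (∀ x y : V,
      S.mul x (S.z0 y) = S.mul (S.z0 x) y ∧
      S.mul (S.z0 x) y = S.mul (S.z0 x) (S.z0 y) ∧
      S.mul (S.z0 x) (S.z0 y) = S.z0 (S.mul x y) ∧
      S.z0 (S.mul x y) = S.add (S.z0 x) (S.z0 y)) ∧
    (∀ e f : V, S.IsIdem e → S.IsIdem f →
      S.mul e f = S.add e f ∧ S.add e f = S.mul f e) := by

  have A := S.toInvSemivectorSpace
  letI : Std.Associative S.toInvSemivectorSpace.add := ⟨S.add_assoc'⟩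
  letI : Std.Commutative S.toInvSemivectorSpace.add := ⟨S.add_comm'⟩
  constructor
  · intro x y
    have hy : S.IsIdem (S.z0 y) := S.toInvSemivectorSpace.isIdem_z0 y
    have hx : S.IsIdem (S.z0 x) := S.toInvSemivectorSpace.isIdem_z0 x
    have e1 : S.mul x (S.z0 y) = S.add (S.z0 x) (S.z0 y) := by
      have := S.mul_eq_of_idem hsem (S.isIdem_mul_right hy x)
      rwa [S.toInvSemivectorSpace.z0_z0 y] at this
    have e2 : S.mul (S.z0 x) y = S.add (S.z0 x) (S.z0 y) := by
      have := S.mul_eq_of_idem hsem (S.isIdem_mul_left hx y)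
      rwa [S.toInvSemivectorSpace.z0_z0 x] at this
    have e3 : S.mul (S.z0 x) (S.z0 y) = S.add (S.z0 x) (S.z0 y) := by
      have := S.mul_eq_of_idem hsem (S.isIdem_mul_left hx (S.z0 y))
      rwa [S.toInvSemivectorSpace.z0_z0 x, S.toInvSemivectorSpace.z0_z0 y] at this
    have e4 : S.z0 (S.mul x y) = S.add (S.z0 x) (S.z0 y) := by
      rw [hsem x y, S.toInvSemivectorSpace.z0_add]
    exact ⟨e1.trans e2.symm, e2.trans e3.symm, e3.trans e4.symm, e4⟩
  · intro e f he hf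
    have key : ∀ a b : V, S.IsIdem a → S.IsIdem b → S.mul a b = S.add a b := by
      intro a b ha hb
      have hle := S.idem_mul_le₂ a b ha hb
      rw [InvSemivectorSpace.le] at hle
      have hz : S.z0 (S.mul a b) = S.add a b := by
        rw [hsem a b, S.toInvSemivectorSpace.z0_add,
          S.toInvSemivectorSpace.z0_of_idem ha, S.toInvSemivectorSpace.z0_of_idem hb]
      rw [hz] at hle
      calc S.mul a b = S.add b (S.add a b) := hle
      _ = S.add a (S.add b b) := by ac_rfl
      _ = S.add a b := by rw [hb]
    refine ⟨key e f he hf, ?_⟩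
    rw [key f e hf he, S.add_comm' f e]
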